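/- arXiv:2501.12984 — 7 statements merged into one kernel-verified Lean document; each statement's English description precedes it below -/
import Mathlib

section
/- Let C be an (n,k,ℓ) MDS array code over F_q in systematic form with block matrix A (r = n−k, 2 ≤ h ≤ r, β = hℓ/r an integer). Suppose the h-subset F = {u_{i_1},…,u_{i_h}} of the systematic nodes admits an (h, n−h) optimal repair scheme with repair matrices S_{j→F} (j ∈ [n]∖F) and reconstruction matrix M_F. Then: (1) the hℓ×hℓ square matrix S_{P→F}·A(:,F), where S_{P→F} = diag(S_{p_1→F},…,S_{p_r→F}), is invertible; (2) for every parity node p_t (1 ≤ t ≤ r) and every non-failed systematic node u ∈ U∖F, the row space of S_{p_t→F}·A_{p_t,u} equals the row space of S_{u→F}; (3) every repair matrix S_{j→F}, j ∈ [n]∖F, has full row rank β. -/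
open Matrix

noncomputable section

variable {𝔽 : Type*} [Field 𝔽]

/-- Every square block submatrix of the `r × k` block matrix `A` (with `ℓ × ℓ` blocks) is
invertible; this is the MDS property of the systematic-form array code determined by `A`. -/
def BlockInvertible {r k ℓ : ℕ} (A : Fin r → Fin k → Matrix (Fin ℓ) (Fin ℓ) 𝔽) : Prop :=
  ∀ (I : Finset (Fin r)) (J : Finset (Fin k)), I.card = J.card →
    Function.Bijective
      ((Matrix.of fun p : ↥I × Fin ℓ => fun q : ↥J × Fin ℓ =>
        A p.1.1 q.1.1 p.2 q.2).mulVecLin)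

/-- The value of the codeword parameterized by the systematic data `x` at a node:
nodes are indexed by `Fin k ⊕ Fin r` (systematic nodes `u_j = Sum.inl j`,
parity nodes `p_i = Sum.inr i`), and `C_{p_i} = ∑ j, A_{p_i,u_j} x_j`. -/
def nodeVal {r k ℓ : ℕ} (A : Fin r → Fin k → Matrix (Fin ℓ) (Fin ℓ) 𝔽)
    (x : Fin k → Fin ℓ → 𝔽) : Fin k ⊕ Fin r → Fin ℓ → 𝔽
  | Sum.inl j => x j
  | Sum.inr i => ∑ j, (A i j).mulVec (x j)

/-- The helper nodes for a failed set `F` of systematic nodes: all `n - h` other nodes. -/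
def helperSet {r k : ℕ} (F : Finset (Fin k)) : Finset (Fin k ⊕ Fin r) :=
  (F.map ⟨Sum.inl, Sum.inl_injective⟩)ᶜ

/-- An `(h, n-h)` optimal repair scheme for the failed set `F` of systematic nodes of the
systematic-form code determined by `A`: each helper node `j` sends `S j *ᵥ C_j`, and a
linear map `g` (the matrix `M_F`) reconstructs the stacked failed symbols. -/
def SysRepairScheme {r k ℓ β : ℕ} (A : Fin r → Fin k → Matrix (Fin ℓ) (Fin ℓ) 𝔽)
    (F : Finset (Fin k)) (S : Fin k ⊕ Fin r → Matrix (Fin β) (Fin ℓ) 𝔽) : Prop :=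
  ∃ g : (↥(helperSet (r := r) F) → Fin β → 𝔽) →ₗ[𝔽] (↥F → Fin ℓ → 𝔽),
    ∀ x : Fin k → Fin ℓ → 𝔽, ∀ i : ↥F,
      x i.1 = g (fun j => (S j.1).mulVec (nodeVal A x j.1)) i

/-- The row space of a matrix. -/
def rowSpace {m n : Type*} (S : Matrix m n 𝔽) : Submodule 𝔽 (n → 𝔽) :=
  Submodule.span 𝔽 (Set.range fun i : m => fun j : n => S i j)

/-! ### Auxiliary lemmas -/

lemma rank_eq_finrank_rowSpace' {m n : Type*} [Fintype m] [Fintype n] (S : Matrix m n 𝔽) :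
    S.rank = Module.finrank 𝔽 (rowSpace S) :=
  Matrix.rank_eq_finrank_span_row S

lemma rowSpace_mul_le' {m p n : Type*} [Fintype p] (X : Matrix m p 𝔽) (N : Matrix p n 𝔽) :
    rowSpace (X * N) ≤ rowSpace N := by
  rw [rowSpace, Submodule.span_le]
  rintro _ ⟨i, rfl⟩
  show (fun j => (X * N) i j) ∈ (rowSpace N : Set (n → 𝔽))
  have : (fun j => (X * N) i j) = ∑ d, X i d • (fun j => N d j) := by
    funext j
    simp [Matrix.mul_apply, Finset.sum_apply]
  rw [this]
  exact Submodule.sum_mem _ fun d _ =>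
    Submodule.smul_mem _ _ (Submodule.subset_span ⟨d, rfl⟩)

lemma finrank_finsetSup_le' {V : Type*} [AddCommGroup V] [Module 𝔽 V] [FiniteDimensional 𝔽 V]
    {ι : Type*} (s : Finset ι) (W : ι → Submodule 𝔽 V) :
    Module.finrank 𝔽 ↥(s.sup W) ≤ ∑ i ∈ s, Module.finrank 𝔽 ↥(W i) := by
  classical
  induction s using Finset.cons_induction with
  | empty => simp
  | cons a s ha ih =>
    rw [Finset.sup_cons, Finset.sum_cons]
    calc Module.finrank 𝔽 ↥((W a) ⊔ s.sup W)
        ≤ Module.finrank 𝔽 ↥((W a) ⊔ s.sup W) + Module.finrank 𝔽 ↥((W a) ⊓ s.sup W) :=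
          Nat.le_add_right _ _
      _ = Module.finrank 𝔽 ↥(W a) + Module.finrank 𝔽 ↥(s.sup W) :=
          Submodule.finrank_sup_add_finrank_inf_eq _ _
      _ ≤ Module.finrank 𝔽 ↥(W a) + ∑ i ∈ s, Module.finrank 𝔽 ↥(W i) := by omega

lemma block_mulVec' {r ℓ β : ℕ} {κ : Type*} [Fintype κ]
    (S : Fin r → Matrix (Fin β) (Fin ℓ) 𝔽) (Ab : Fin r → κ → Matrix (Fin ℓ) (Fin ℓ) 𝔽)
    (v : κ × Fin ℓ → 𝔽) (i : Fin r) (b : Fin β) :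
    ((Matrix.of fun p : Fin r × Fin β => fun q : κ × Fin ℓ =>
        (S p.1 * Ab p.1 q.1) p.2 q.2) *ᵥ v) (i, b)
      = ((S i) *ᵥ ∑ j : κ, (Ab i j) *ᵥ fun c => v (j, c)) b := by
  simp only [Matrix.mulVec, dotProduct, Matrix.of_apply, Matrix.mul_apply,
    Finset.sum_apply, Fintype.sum_prod_type, Finset.sum_mul, Finset.mul_sum]
  conv_rhs => rw [Finset.sum_comm]
  refine Finset.sum_congr rfl fun j _ => ?_
  rw [Finset.sum_comm]
  exact Finset.sum_congr rfl fun c _ => Finset.sum_congr rfl fun d _ => (mul_assoc _ _ _)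

lemma matrix_ext_of_mulVec' {m n : Type*} [Fintype n] [DecidableEq n] {M N : Matrix m n 𝔽}
    (hMN : ∀ w, M *ᵥ w = N *ᵥ w) : M = N := by
  ext b c
  have := congrFun (hMN (Pi.single c 1)) b
  simpa using this

/-- The map sending `y` to the helper-data family that is `y` at node `u` and `0` elsewhere. -/
def deltaMap {r k β : ℕ} (F : Finset (Fin k)) (u : Fin k) :
    (Fin β → 𝔽) →ₗ[𝔽] (↥(helperSet (r := r) F) → Fin β → 𝔽) where
  toFun y j := if j.1 = Sum.inl u then y else 0
  map_add' y z := by funext j; by_cases hj : j.1 = Sum.inl u <;> simp [hj]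
  map_smul' c y := by funext j; by_cases hj : j.1 = Sum.inl u <;> simp [hj]

/-- Stacking a family of vectors indexed by `↥F` into one vector indexed by `↥F × Fin ℓ`. -/
def stackMap {ℓ : ℕ} {κ : Type*} : (κ → Fin ℓ → 𝔽) →ₗ[𝔽] (κ × Fin ℓ → 𝔽) where
  toFun v q := v q.1 q.2
  map_add' _ _ := rfl
  map_smul' _ _ := rfl

/-- Projection onto the `t`-th block of a stacked vector. -/
def projMap {r β : ℕ} (t : Fin r) : (Fin r × Fin β → 𝔽) →ₗ[𝔽] (Fin β → 𝔽) where
  toFun z b := z (t, b)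
  map_add' _ _ := rfl
  map_smul' _ _ := rfl

/-- Lemma 1 of the paper. -/
theorem stmt6 {r k ℓ h β : ℕ} (hh2 : 2 ≤ h) (hhr : h ≤ r) (hβ : h * ℓ = r * β)
    (A : Fin r → Fin k → Matrix (Fin ℓ) (Fin ℓ) 𝔽) (hA : BlockInvertible A)
    (F : Finset (Fin k)) (hF : F.card = h)
    (S : Fin k ⊕ Fin r → Matrix (Fin β) (Fin ℓ) 𝔽)
    (hS : SysRepairScheme A F S) :
    -- (1) the `hℓ × hℓ` square matrix `S_{P→F} ⬝ A(:,F)` is invertible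
    Function.Bijective
      ((Matrix.of fun p : Fin r × Fin β => fun q : ↥F × Fin ℓ =>
        (S (Sum.inr p.1) * A p.1 q.1.1) p.2 q.2).mulVecLin) ∧
    -- (2) `⟨S_{p_t→F} A_{p_t,u}⟩ = ⟨S_{u→F}⟩` for every parity node `p_t` and every
    -- non-failed systematic node `u`
    (∀ t : Fin r, ∀ u : Fin k, u ∉ F →
      rowSpace (S (Sum.inr t) * A t u) = rowSpace (S (Sum.inl u))) ∧
    -- (3) every repair matrix has full row rank `β`
    (∀ j : Fin k ⊕ Fin r, j ∈ helperSet (r := r) F → (S j).rank = β) := by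
  classical
  obtain ⟨g, hg⟩ := hS
  set B : Matrix (Fin r × Fin β) (↥F × Fin ℓ) 𝔽 :=
    Matrix.of fun p : Fin r × Fin β => fun q : ↥F × Fin ℓ =>
      (S (Sum.inr p.1) * A p.1 q.1.1) p.2 q.2 with hBdef
  have hBv : ∀ (v : ↥F × Fin ℓ → 𝔽) (i : Fin r) (b : Fin β),
      (B *ᵥ v) (i, b) = ((S (Sum.inr i)) *ᵥ ∑ j : ↥F, (A i j.1) *ᵥ fun c => v (j, c)) b :=
    fun v i b => block_mulVec' (fun i => S (Sum.inr i)) (fun i (j : ↥F) => A i j.1) v i b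
  -- Part (1): injectivity
  have hinj : Function.Injective B.mulVecLin := by
    rw [← LinearMap.ker_eq_bot, LinearMap.ker_eq_bot']
    intro v hv
    have hv' : B *ᵥ v = 0 := hv
    set x : Fin k → Fin ℓ → 𝔽 :=
      fun j => if hj : j ∈ F then (fun c => v (⟨j, hj⟩, c)) else 0 with hx
    have hdata : (fun jH : ↥(helperSet (r := r) F) => (S jH.1) *ᵥ nodeVal A x jH.1) = 0 := by
      funext jH
      obtain ⟨j | i, hj⟩ := jH
      · have hjF : j ∉ F := by simpa [helperSet] using hj
        show (S (Sum.inl j)) *ᵥ x j = _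
        simp only [hx]
        simp [hjF]
      · show (S (Sum.inr i)) *ᵥ nodeVal A x (Sum.inr i) = _
        have hsum : nodeVal A x (Sum.inr i) = ∑ j : ↥F, (A i j.1) *ᵥ fun c => v (j, c) := by
          show (∑ j : Fin k, (A i j) *ᵥ x j) = _
          have h1 : (∑ j : Fin k, (A i j) *ᵥ x j) = ∑ j ∈ F, (A i j) *ᵥ x j := by
            refine (Finset.sum_subset (Finset.subset_univ F) fun j _ hjF => ?_).symm
            simp only [hx]; simp [hjF]
          rw [h1, ← Finset.sum_coe_sort F (fun j => (A i j) *ᵥ x j)]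
          refine Finset.sum_congr rfl fun j _ => ?_
          simp only [hx]; rw [dif_pos j.2]
        rw [hsum]
        funext b
        rw [← hBv v i b, hv']
        rfl
    funext q
    obtain ⟨jF, c⟩ := q
    have hq := hg x jF
    rw [hdata, map_zero] at hq
    have hxv : x jF.1 = fun c => v (jF, c) := by simp only [hx]; rw [dif_pos jF.2]
    have := congrFun (hxv.symm.trans hq) c
    simpa using this
  have hcard : Module.finrank 𝔽 (↥F × Fin ℓ → 𝔽) = Module.finrank 𝔽 (Fin r × Fin β → 𝔽) := by
    rw [Module.finrank_fintype_fun_eq_card, Module.finrank_fintype_fun_eq_card]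
    simp [Fintype.card_coe, hF, hβ]
  have hbij : Function.Bijective B.mulVecLin :=
    ⟨hinj, (LinearMap.injective_iff_surjective_of_finrank_eq_finrank hcard).mp hinj⟩
  -- row spaces of block rows of B
  have hrankB : B.rank = h * ℓ := by
    rw [Matrix.rank, LinearMap.range_eq_top.mpr hbij.2, finrank_top,
      Module.finrank_fintype_fun_eq_card]
    simp [hβ]
  have hrowB : rowSpace B = ⊤ := by
    apply Submodule.eq_top_of_finrank_eq
    rw [← rank_eq_finrank_rowSpace', hrankB, Module.finrank_fintype_fun_eq_card]
    simp [Fintype.card_coe, hF]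
  set W : Fin r → Submodule 𝔽 (↥F × Fin ℓ → 𝔽) :=
    fun t => rowSpace (Matrix.of fun (b : Fin β) (q : ↥F × Fin ℓ) => B (t, b) q) with hWdef
  have hWsup : (⨆ t, W t) = ⊤ := by
    rw [← hrowB, rowSpace]
    have hr : (Set.range fun p : Fin r × Fin β => fun q : ↥F × Fin ℓ => B p q)
        = ⋃ t, Set.range fun b : Fin β => fun q : ↥F × Fin ℓ => B (t, b) q := by
      ext y
      simp only [Set.mem_range, Set.mem_iUnion]
      constructor
      · rintro ⟨⟨t, b⟩, rfl⟩; exact ⟨t, b, rfl⟩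
      · rintro ⟨t, b, rfl⟩; exact ⟨(t, b), rfl⟩
    rw [hr, Submodule.span_iUnion]
    rfl
  have hWle : ∀ t, Module.finrank 𝔽 ↥(W t) ≤ β := by
    intro t
    rw [hWdef, ← rank_eq_finrank_rowSpace']
    exact (Matrix.rank_le_card_height _).trans (by simp)
  have hWsum : ∑ t : Fin r, Module.finrank 𝔽 ↥(W t) = ∑ _t : Fin r, β := by
    have hle : ∑ t : Fin r, Module.finrank 𝔽 ↥(W t) ≤ ∑ _t : Fin r, β :=
      Finset.sum_le_sum fun t _ => hWle t
    have hge : (h * ℓ) ≤ ∑ t : Fin r, Module.finrank 𝔽 ↥(W t) := by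
      have := finrank_finsetSup_le' (𝔽 := 𝔽) Finset.univ W
      rw [Finset.sup_univ_eq_iSup, hWsup] at this
      calc h * ℓ = Module.finrank 𝔽 ↥(⊤ : Submodule 𝔽 (↥F × Fin ℓ → 𝔽)) := by
            rw [finrank_top, Module.finrank_fintype_fun_eq_card]
            simp [Fintype.card_coe, hF]
        _ ≤ _ := this
    have : ∑ _t : Fin r, β = h * ℓ := by simp [hβ.symm, mul_comm]
    omega
  have hWeq : ∀ t, Module.finrank 𝔽 ↥(W t) = β := by
    intro t
    have := (Finset.sum_eq_sum_iff_of_le fun i _ => hWle i).mp hWsum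
    exact this t (Finset.mem_univ t)
  have hrankSP : ∀ t : Fin r, (S (Sum.inr t)).rank = β := by
    intro t
    have h1 : (Matrix.of fun (b : Fin β) (q : ↥F × Fin ℓ) => B (t, b) q)
        = S (Sum.inr t) * (Matrix.of fun (d : Fin ℓ) (q : ↥F × Fin ℓ) => A t q.1.1 d q.2) := by
      ext b q
      simp [hBdef, Matrix.mul_apply]
    have h2 : Module.finrank 𝔽 ↥(W t) ≤ (S (Sum.inr t)).rank := by
      have hWt : W t = rowSpace (Matrix.of fun (b : Fin β) (q : ↥F × Fin ℓ) => B (t, b) q) := rfl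
      rw [hWt, ← rank_eq_finrank_rowSpace', h1]
      exact Matrix.rank_mul_le_left _ _
    have h3 : (S (Sum.inr t)).rank ≤ β := (Matrix.rank_le_card_height _).trans (by simp)
    have h4 := hWeq t
    omega
  -- invertibility of each single block A t u
  have hAtu : ∀ (t : Fin r) (u : Fin k), Function.Surjective (A t u).mulVecLin := by
    intro t u
    have hb := hA {t} {u} (by simp)
    have hinj' : Function.Injective (A t u).mulVecLin := by
      rw [← LinearMap.ker_eq_bot, LinearMap.ker_eq_bot']
      intro w hw
      have hw' : (A t u) *ᵥ w = 0 := hw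
      have hv : (Matrix.of fun p : ↥({t} : Finset (Fin r)) × Fin ℓ =>
          fun q : ↥({u} : Finset (Fin k)) × Fin ℓ => A p.1.1 q.1.1 p.2 q.2).mulVecLin
          (fun q => w q.2) = 0 := by
        funext p
        have hp : p.1.1 = t := Finset.mem_singleton.mp p.1.2
        show (∑ q : ↥({u} : Finset (Fin k)) × Fin ℓ, A p.1.1 q.1.1 p.2 q.2 * w q.2) = 0
        rw [hp, Fintype.sum_prod_type]
        rw [Finset.sum_coe_sort ({u} : Finset (Fin k))
          (fun a => ∑ c : Fin ℓ, A t a p.2 c * w c), Finset.sum_singleton]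
        have : (∑ c : Fin ℓ, A t u p.2 c * w c) = ((A t u) *ᵥ w) p.2 := rfl
        rw [this, hw']
        rfl
      have h0 : (fun q : ↥({u} : Finset (Fin k)) × Fin ℓ => w q.2) = 0 := by
        apply hb.1
        rw [hv, map_zero]
      funext c
      exact congrFun h0 (⟨u, Finset.mem_singleton_self u⟩, c)
    exact (LinearMap.injective_iff_surjective).mp hinj'
  -- the key analysis for a non-failed systematic node
  have key : ∀ (u : Fin k), u ∉ F → ∀ t : Fin r,
      rowSpace (S (Sum.inr t) * A t u) = rowSpace (S (Sum.inl u)) ∧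
      (S (Sum.inl u)).rank = β := by
    intro u hu t
    have hrk : (S (Sum.inr t) * A t u).rank = β := by
      rw [Matrix.rank, Matrix.mulVecLin_mul,
        LinearMap.range_comp_of_range_eq_top _ (LinearMap.range_eq_top.mpr (hAtu t u)),
        ← Matrix.rank, hrankSP t]
    have hkey : ∀ w : Fin ℓ → 𝔽, (S (Sum.inr t) * A t u) *ᵥ w =
        -((projMap t ∘ₗ B.mulVecLin ∘ₗ stackMap ∘ₗ g ∘ₗ deltaMap (r := r) F u)
          ((S (Sum.inl u)) *ᵥ w)) := by
      intro w
      obtain ⟨vw, hvw⟩ := hbij.2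
        (fun p : Fin r × Fin β => -(((S (Sum.inr p.1) * A p.1 u) *ᵥ w) p.2))
      have hvw' : B *ᵥ vw =
          fun p : Fin r × Fin β => -(((S (Sum.inr p.1) * A p.1 u) *ᵥ w) p.2) := hvw
      set x : Fin k → Fin ℓ → 𝔽 :=
        fun j => if hj : j ∈ F then (fun c => vw (⟨j, hj⟩, c))
          else if j = u then w else 0 with hx
      have hxu : x u = w := by simp only [hx]; simp [hu]
      have hdata : (fun jH : ↥(helperSet (r := r) F) => (S jH.1) *ᵥ nodeVal A x jH.1)
          = deltaMap (r := r) F u ((S (Sum.inl u)) *ᵥ w) := by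
        funext jH
        obtain ⟨j | i, hj⟩ := jH
        · have hjF : j ∉ F := by simpa [helperSet] using hj
          show (S (Sum.inl j)) *ᵥ x j =
            if (Sum.inl j : Fin k ⊕ Fin r) = Sum.inl u then (S (Sum.inl u)) *ᵥ w else 0
          by_cases hju : j = u
          · subst hju; rw [if_pos rfl, hxu]
          · rw [if_neg (by simp [hju])]
            simp only [hx]; simp [hjF, hju]
        · show (S (Sum.inr i)) *ᵥ nodeVal A x (Sum.inr i) =
            if (Sum.inr i : Fin k ⊕ Fin r) = Sum.inl u then (S (Sum.inl u)) *ᵥ w else 0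
          rw [if_neg (by simp)]
          have hsum : nodeVal A x (Sum.inr i)
              = (∑ j : ↥F, (A i j.1) *ᵥ fun c => vw (j, c)) + (A i u) *ᵥ w := by
            show (∑ j : Fin k, (A i j) *ᵥ x j) = _
            have h1 : (∑ j : Fin k, (A i j) *ᵥ x j) = ∑ j ∈ insert u F, (A i j) *ᵥ x j := by
              refine (Finset.sum_subset (Finset.subset_univ _) fun j _ hjF => ?_).symm
              have h2 : j ∉ F := fun hh => hjF (Finset.mem_insert_of_mem hh)
              have h3 : j ≠ u := fun hh => hjF (hh ▸ Finset.mem_insert_self u F)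
              simp only [hx]; simp [h2, h3]
            rw [h1, Finset.sum_insert hu, hxu, add_comm]
            congr 1
            rw [← Finset.sum_coe_sort F (fun j => (A i j) *ᵥ x j)]
            refine Finset.sum_congr rfl fun j _ => ?_
            simp only [hx]; rw [dif_pos j.2]
          rw [hsum, Matrix.mulVec_add]
          funext b
          have h1 := hBv vw i b
          rw [hvw'] at h1
          have h2 : ((S (Sum.inr i)) *ᵥ ∑ j : ↥F, (A i j.1) *ᵥ fun c => vw (j, c)) b
              = -(((S (Sum.inr i) * A i u) *ᵥ w) b) := h1.symm
          simp only [Pi.add_apply, h2, Matrix.mulVec_mulVec]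
          simp
      have hstk : (stackMap (g (deltaMap (r := r) F u ((S (Sum.inl u)) *ᵥ w)))) = vw := by
        funext q
        have hq := hg x q.1
        rw [hdata] at hq
        show g (deltaMap (r := r) F u ((S (Sum.inl u)) *ᵥ w)) q.1 q.2 = vw q
        rw [← hq]
        show x q.1.1 q.2 = vw q
        simp only [hx]; rw [dif_pos q.1.2]
      show (S (Sum.inr t) * A t u) *ᵥ w =
        -(projMap t (B.mulVecLin (stackMap (g (deltaMap (r := r) F u ((S (Sum.inl u)) *ᵥ w))))))
      rw [hstk]
      have : B.mulVecLin vw = B *ᵥ vw := rfl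
      rw [this, hvw']
      funext b
      show _ = -(projMap t (fun p : Fin r × Fin β =>
        -(((S (Sum.inr p.1) * A p.1 u) *ᵥ w) p.2))) b
      simp [projMap]
    -- factor through a matrix
    have hfac : S (Sum.inr t) * A t u =
        (LinearMap.toMatrix' (-(projMap t ∘ₗ B.mulVecLin ∘ₗ stackMap ∘ₗ g ∘ₗ
          deltaMap (r := r) F u))) * S (Sum.inl u) := by
      apply matrix_ext_of_mulVec'
      intro w
      conv_rhs => rw [← Matrix.mulVec_mulVec]
      rw [hkey w]
      calc -((projMap t ∘ₗ B.mulVecLin ∘ₗ stackMap ∘ₗ g ∘ₗ deltaMap (r := r) F u)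
              ((S (Sum.inl u)) *ᵥ w))
          = (-(projMap t ∘ₗ B.mulVecLin ∘ₗ stackMap ∘ₗ g ∘ₗ deltaMap (r := r) F u))
              ((S (Sum.inl u)) *ᵥ w) := rfl
        _ = Matrix.toLin' (LinearMap.toMatrix'
              (-(projMap t ∘ₗ B.mulVecLin ∘ₗ stackMap ∘ₗ g ∘ₗ deltaMap (r := r) F u)))
              ((S (Sum.inl u)) *ᵥ w) :=
            (LinearMap.congr_fun (Matrix.toLin'_toMatrix' _) _).symm
        _ = (LinearMap.toMatrix'
              (-(projMap t ∘ₗ B.mulVecLin ∘ₗ stackMap ∘ₗ g ∘ₗ deltaMap (r := r) F u)))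
              *ᵥ ((S (Sum.inl u)) *ᵥ w) := Matrix.toLin'_apply _ _
    have hsub : rowSpace (S (Sum.inr t) * A t u) ≤ rowSpace (S (Sum.inl u)) := by
      rw [hfac]
      exact rowSpace_mul_le' _ _
    have hfr1 : Module.finrank 𝔽 ↥(rowSpace (S (Sum.inr t) * A t u)) = β := by
      rw [← rank_eq_finrank_rowSpace', hrk]
    have hfr2 : Module.finrank 𝔽 ↥(rowSpace (S (Sum.inl u))) ≤ β := by
      rw [← rank_eq_finrank_rowSpace']
      exact (Matrix.rank_le_card_height _).trans (by simp)
    have heq : rowSpace (S (Sum.inr t) * A t u) = rowSpace (S (Sum.inl u)) :=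
      Submodule.eq_of_le_of_finrank_le hsub (by omega)
    refine ⟨heq, ?_⟩
    rw [rank_eq_finrank_rowSpace', ← heq, hfr1]
  refine ⟨hbij, fun t u hu => (key u hu t).1, ?_⟩
  rintro (u | i) hj
  · have hu : u ∉ F := by simpa [helperSet] using hj
    exact (key u hu ⟨0, by omega⟩).2
  · exact hrankSP i
end
end

section
/- Let C be an (n,k,ℓ) MDS array code over F_q in systematic form with block matrix A (r = n−k, 2 ≤ h ≤ r, β = hℓ/r an integer), and let F_1 and F_2 be two h-subsets of the systematic nodes, each admitting an (h, n−h) optimal repair scheme (with repair matrices S_{j→F_1} and S_{j→F_2} respectively). Then rank( S_{P→F_2}·A(:,F_1) ) ≤ (h − |F_1 ∩ F_2|)·hℓ/r + |F_1 ∩ F_2|·ℓ, where S_{P→F_2} = diag(S_{p_1→F_2},…,S_{p_r→F_2}). -/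
open Matrix

noncomputable section

variable {𝔽 : Type*} [Field 𝔽]

/-! The matrix `S_{P→F₂} A(:,F₁)` is the concatenation of its block columns
`S_{P→F₂} A(:,j)`, `j ∈ F₁`, and rank is subadditive over them. A block with `j ∈ F₂` has
rank at most its width `ℓ`. For `j ∉ F₂`, the repair of `F₂` recovers any data supported on
`F₂` from its parity messages alone, so the decoder restricted to parity messages is onto
that data; both spaces have dimension `hℓ = rβ`, so it is also injective. Hence data `e_j v`
with `S_{j→F₂} v = 0`, whose messages to the decoder are its parity messages and whose
decoded value is `0`, has vanishing parity messages: `ker S_{j→F₂} ⊆ ker S_{P→F₂} A(:,j)`,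
and that block has rank at most `β`. -/

theorem LinearMap.finrank_range_finsetSum_le {K V W ι : Type*} [DivisionRing K]
    [AddCommGroup V] [Module K V] [FiniteDimensional K V] [AddCommGroup W] [Module K W]
    (s : Finset ι) (f : ι → V →ₗ[K] W) :
    Module.finrank K (range (∑ i ∈ s, f i)) ≤ ∑ i ∈ s, Module.finrank K (range (f i)) := by
  have h := LinearMap.rank_finsetSum_le s f
  simp only [LinearMap.rank, ← Module.finrank_eq_rank] at h
  exact_mod_cast h

theorem LinearMap.finrank_range_le_of_ker_le {K V W W' : Type*} [DivisionRing K]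
    [AddCommGroup V] [Module K V] [FiniteDimensional K V] [AddCommGroup W] [Module K W]
    [AddCommGroup W'] [Module K W'] {f : V →ₗ[K] W} {g : V →ₗ[K] W'} (h : ker f ≤ ker g) :
    Module.finrank K (range g) ≤ Module.finrank K (range f) := by
  have := Submodule.finrank_mono h
  have := f.finrank_range_add_finrank_ker
  have := g.finrank_range_add_finrank_ker
  omega

theorem Matrix.rank_le_sum_rank_submatrix_prodMk {R m ι n : Type*} [Field R] [Fintype ι]
    [Fintype n] (M : Matrix m (ι × n) R) :
    M.rank ≤ ∑ i, (M.submatrix id (Prod.mk i)).rank := by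
  have hsum : M.mulVecLin =
      ∑ i, (M.submatrix id (Prod.mk i)).mulVecLin ∘ₗ LinearMap.funLeft R R (Prod.mk i) := by
    ext v p
    simp [mulVec, dotProduct, Fintype.sum_prod_type]
  rw [Matrix.rank, hsum]
  refine (LinearMap.finrank_range_finsetSum_le _ _).trans (Finset.sum_le_sum fun i _ => ?_)
  exact Submodule.finrank_mono (LinearMap.range_comp_le_range _ _)

section Repair

variable {r k ℓ β : ℕ} {A : Fin r → Fin k → Matrix (Fin ℓ) (Fin ℓ) 𝔽} {F : Finset (Fin k)}
  {S : Fin k ⊕ Fin r → Matrix (Fin β) (Fin ℓ) 𝔽}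

def parityEmbed (F : Finset (Fin k)) :
    (Fin r → Fin β → 𝔽) →ₗ[𝔽] (↥(helperSet (r := r) F) → Fin β → 𝔽) :=
  LinearMap.pi fun t =>
    Sum.elim (fun _ => 0) (LinearMap.proj (R := 𝔽) (φ := fun _ : Fin r => Fin β → 𝔽)) t.1

theorem parityEmbed_apply (z : Fin r → Fin β → 𝔽) (t : ↥(helperSet (r := r) F)) :
    parityEmbed F z t = Sum.elim (fun _ => 0) z t.1 := by
  obtain ⟨_ | _, _⟩ := t <;> rfl

theorem helper_messages_eq_parityEmbed {x : Fin k → Fin ℓ → 𝔽}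
    (hsys : ∀ m ∉ F, S (Sum.inl m) *ᵥ x m = 0) :
    (fun t : ↥(helperSet (r := r) F) => S t.1 *ᵥ nodeVal A x t.1) =
      parityEmbed F (fun i => S (Sum.inr i) *ᵥ nodeVal A x (Sum.inr i)) := by
  funext ⟨t, ht⟩
  rw [parityEmbed_apply]
  cases t with
  | inl m => exact hsys m (by simpa [helperSet] using ht)
  | inr i => rfl

theorem nodeVal_single_inr (i : Fin r) (j : Fin k) (v : Fin ℓ → 𝔽) :
    nodeVal A (Pi.single j v) (Sum.inr i) = A i j *ᵥ v := by
  simp [nodeVal, Pi.single_apply, apply_ite]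

namespace SysRepairScheme

theorem parity_messages_eq_zero (hcard : F.card * ℓ = r * β) (hS : SysRepairScheme A F S)
    {x : Fin k → Fin ℓ → 𝔽} (hF : ∀ i ∈ F, x i = 0)
    (hsys : ∀ m ∉ F, S (Sum.inl m) *ᵥ x m = 0) (i : Fin r) :
    S (Sum.inr i) *ᵥ nodeVal A x (Sum.inr i) = 0 := by
  obtain ⟨g, hg⟩ := hS
  have hsurj : Function.Surjective (g ∘ₗ parityEmbed F) := by
    intro y
    let z : Fin k → Fin ℓ → 𝔽 := fun m => if h : m ∈ F then y ⟨m, h⟩ else 0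
    refine ⟨fun i => S (Sum.inr i) *ᵥ nodeVal A z (Sum.inr i), funext fun j => ?_⟩
    have hz : ∀ m ∉ F, S (Sum.inl m) *ᵥ z m = 0 := fun m hm => by simp [z, hm]
    rw [LinearMap.comp_apply, ← helper_messages_eq_parityEmbed hz, ← hg]
    simp [z]
  have hfinrank : Module.finrank 𝔽 (Fin r → Fin β → 𝔽) = Module.finrank 𝔽 (↥F → Fin ℓ → 𝔽) := by
    simp only [Module.finrank_pi_fintype]
    simp [hcard]
  have hinj := (LinearMap.injective_iff_surjective_of_finrank_eq_finrank hfinrank).mpr hsurj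
  suffices (fun i => S (Sum.inr i) *ᵥ nodeVal A x (Sum.inr i)) = 0 from congrFun this i
  refine hinj ?_
  rw [LinearMap.comp_apply, ← helper_messages_eq_parityEmbed hsys, map_zero]
  funext j
  rw [← hg]
  exact hF j j.2

theorem rank_parityBlock_le (hcard : F.card * ℓ = r * β) (hS : SysRepairScheme A F S)
    {j : Fin k} (hj : j ∉ F) :
    (Matrix.of fun p : Fin r × Fin β => fun q : Fin ℓ =>
      (S (Sum.inr p.1) * A p.1 j) p.2 q).rank ≤ β := by
  refine (LinearMap.finrank_range_le_of_ker_le fun v hv => ?_).trans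
    (S (Sum.inl j)).rank_le_card_height |>.trans (by simp)
  have hsys : ∀ m ∉ F, S (Sum.inl m) *ᵥ (Pi.single j v : Fin k → Fin ℓ → 𝔽) m = 0 := by
    intro m _
    rcases eq_or_ne m j with rfl | hm
    · simpa using hv
    · simp [hm]
  have hpar := hS.parity_messages_eq_zero hcard
    (fun i hi => by simp [ne_of_mem_of_not_mem hi hj]) hsys
  funext ⟨i, b⟩
  have hpar_i := hpar i
  rw [nodeVal_single_inr, mulVec_mulVec] at hpar_i
  exact congrFun hpar_i b

end SysRepairScheme

end Repair

theorem stmt7_general {r k ℓ h β : ℕ} (hβ : h * ℓ = r * β)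
    (A : Fin r → Fin k → Matrix (Fin ℓ) (Fin ℓ) 𝔽)
    (F₁ F₂ : Finset (Fin k)) (hF₁ : F₁.card = h) (hF₂ : F₂.card = h)
    (S₂ : Fin k ⊕ Fin r → Matrix (Fin β) (Fin ℓ) 𝔽)
    (hS₂ : SysRepairScheme A F₂ S₂) :
    (Matrix.of fun p : Fin r × Fin β => fun q : ↥F₁ × Fin ℓ =>
        (S₂ (Sum.inr p.1) * A p.1 q.1.1) p.2 q.2).rank
      ≤ (h - (F₁ ∩ F₂).card) * β + (F₁ ∩ F₂).card * ℓ := by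
  have hcard : F₂.card * ℓ = r * β := hF₂ ▸ hβ
  calc _ ≤ ∑ j : ↥F₁, if (j : Fin k) ∈ F₂ then ℓ else β := by
        refine (rank_le_sum_rank_submatrix_prodMk _).trans (Finset.sum_le_sum fun j _ => ?_)
        split_ifs with hj
        · exact (rank_le_card_width _).trans (by simp)
        · exact (hS₂.rank_parityBlock_le hcard hj :)
    _ = (F₁ \ F₂).card * β + (F₁ ∩ F₂).card * ℓ := by
        rw [Finset.sum_coe_sort F₁ (fun m => if m ∈ F₂ then ℓ else β), Finset.sum_ite,
          Finset.filter_mem_eq_inter, ← Finset.sdiff_eq_filter]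
        simp [add_comm]
    _ = _ := by rw [Finset.card_sdiff, Finset.inter_comm, hF₁]

/-- Lemma 2 of the paper, inequality part:
`rank(S_{P→F₂} ⬝ A(:,F₁)) ≤ (h - |F₁ ∩ F₂|)·hℓ/r + |F₁ ∩ F₂|·ℓ`; here `hℓ/r = β`. -/
theorem stmt7 {r k ℓ h β : ℕ} (hh2 : 2 ≤ h) (hhr : h ≤ r) (hβ : h * ℓ = r * β)
    (A : Fin r → Fin k → Matrix (Fin ℓ) (Fin ℓ) 𝔽) (hA : BlockInvertible A)
    (F₁ F₂ : Finset (Fin k)) (hF₁ : F₁.card = h) (hF₂ : F₂.card = h)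
    (S₁ S₂ : Fin k ⊕ Fin r → Matrix (Fin β) (Fin ℓ) 𝔽)
    (hS₁ : SysRepairScheme A F₁ S₁) (hS₂ : SysRepairScheme A F₂ S₂) :
    (Matrix.of fun p : Fin r × Fin β => fun q : ↥F₁ × Fin ℓ =>
        (S₂ (Sum.inr p.1) * A p.1 q.1.1) p.2 q.2).rank
      ≤ (h - (F₁ ∩ F₂).card) * β + (F₁ ∩ F₂).card * ℓ :=
  stmt7_general hβ A F₁ F₂ hF₁ hF₂ S₂ hS₂
end
end

section
/- Let C be an (n,k,ℓ) MDS array code having (h,d) optimal repair schemes with constant repair matrices S_F for every h-subset F of its k systematic nodes, where 2 ≤ h ≤ n−k and k+1 ≤ d ≤ n−h. Let 1 ≤ t ≤ ⌊k/h⌋ and let F_1,…,F_t be pairwise disjoint h-subsets of the k systematic nodes. Then dim( ∩_{i=1}^{t} ⟨S_{F_i}⟩ ) ≤ (h/(d−k+h))^t · ℓ. -/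
open Matrix

noncomputable section

variable {𝔽 : Type*} [Field 𝔽]

/-- `C` is an MDS array code of dimension `k` (length `n`, sub-packetization `ℓ`):
any `k` of the `n` code symbols determine the whole codeword. -/
def IsMDSArrayCode {n ℓ : ℕ} (k : ℕ) (C : Submodule 𝔽 (Fin n → Fin ℓ → 𝔽)) : Prop :=
  ∀ K : Finset (Fin n), K.card = k →
    ∀ c ∈ C, ∀ c' ∈ C, (∀ i ∈ K, c i = c' i) → c = c'

/-- `U` is a set of systematic nodes of `C`: the symbols on `U` are free and they
determine the codeword uniquely. -/
def IsSystematicSet {n ℓ : ℕ} (C : Submodule 𝔽 (Fin n → Fin ℓ → 𝔽)) (U : Finset (Fin n)) :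
    Prop :=
  ∀ x : ↥U → Fin ℓ → 𝔽, ∃! c : Fin n → Fin ℓ → 𝔽, c ∈ C ∧ ∀ i : ↥U, c i.1 = x i

/-- A linear repair scheme for the failed nodes `F` from the helper nodes `R`, where the
helper node `j ∈ R` contributes the compressed data `S j *ᵥ C_j` and a linear map `g`
(the matrix `M`) reconstructs the stacked failed symbols `(C_i)_{i ∈ F}`. -/
def IsRepairScheme {n ℓ β : ℕ} (C : Submodule 𝔽 (Fin n → Fin ℓ → 𝔽))
    (F R : Finset (Fin n)) (S : Fin n → Matrix (Fin β) (Fin ℓ) 𝔽) : Prop :=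
  ∃ g : (↥R → Fin β → 𝔽) →ₗ[𝔽] (↥F → Fin ℓ → 𝔽),
    ∀ c ∈ C, ∀ i : ↥F, c i.1 = g (fun j : ↥R => (S j.1).mulVec (c j.1)) i

/-- Optimal access: the repair matrix has at most `β` nonzero columns. -/
def HasOptimalAccess {β ℓ : ℕ} (S : Matrix (Fin β) (Fin ℓ) 𝔽) : Prop :=
  {t : Fin ℓ | (fun b => S b t) ≠ 0}.ncard ≤ β

lemma exists_encoder' {n ℓ : ℕ} {C : Submodule 𝔽 (Fin n → Fin ℓ → 𝔽)} {U : Finset (Fin n)}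
    (hU : IsSystematicSet C U) :
    ∃ E : (↥U → Fin ℓ → 𝔽) →ₗ[𝔽] (Fin n → Fin ℓ → 𝔽),
      (∀ x, E x ∈ C) ∧ (∀ x (i : ↥U), E x i.1 = x i) ∧
      (∀ x c, c ∈ C → (∀ i : ↥U, c i.1 = x i) → c = E x) := by
  classical
  choose e he using fun x => (hU x).exists
  have huniq : ∀ (x) (c), c ∈ C → (∀ i : ↥U, c i.1 = x i) → c = e x := by
    intro x c hc hcx
    obtain ⟨c₀, h₀, hu⟩ := hU x
    rw [hu c ⟨hc, hcx⟩, hu (e x) (he x)]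
  refine ⟨{ toFun := e, map_add' := ?_, map_smul' := ?_ }, fun x => (he x).1,
    fun x => (he x).2, fun x c hc hcx => huniq x c hc hcx⟩
  · intro x y
    refine (huniq (x + y) (e x + e y) (C.add_mem (he x).1 (he y).1) ?_).symm
    intro i
    simp [Pi.add_apply, (he x).2 i, (he y).2 i]
  · intro a x
    refine (huniq (a • x) (a • e x) (C.smul_mem a (he x).1) ?_).symm
    intro i
    simp [(he x).2 i]

def extendZero' {n : ℕ} (ℓ : ℕ) (U F : Finset (Fin n)) (hFU : F ⊆ U) :
    (↥F → Fin ℓ → 𝔽) →ₗ[𝔽] (↥U → Fin ℓ → 𝔽) where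
  toFun x := fun u => if hu : u.1 ∈ F then x ⟨u.1, hu⟩ else 0
  map_add' x y := by
    funext u
    by_cases hu : u.1 ∈ F <;> simp [hu]
  map_smul' a x := by
    funext u
    by_cases hu : u.1 ∈ F <;> simp [hu]

lemma surj_aux' {n ℓ β : ℕ} {C : Submodule 𝔽 (Fin n → Fin ℓ → 𝔽)} {U F P : Finset (Fin n)}
    (E : (↥U → Fin ℓ → 𝔽) →ₗ[𝔽] (Fin n → Fin ℓ → 𝔽))
    (hEC : ∀ x, E x ∈ C) (hEres : ∀ x (i : ↥U), E x i.1 = x i)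
    {S : Matrix (Fin β) (Fin ℓ) 𝔽}
    (hFU : F ⊆ U)
    (hdim : F.card * ℓ = P.card * β)
    (hrep : IsRepairScheme C F ((U \ F) ∪ P) (fun _ => S)) :
    ∀ z : ↥P → Fin β → 𝔽, ∃ c, c ∈ C ∧ (∀ j ∈ U, j ∉ F → c j = 0) ∧
      ∀ (p : Fin n) (hp : p ∈ P), S.mulVec (c p) = z ⟨p, hp⟩ := by
  classical
  obtain ⟨g, hg⟩ := hrep
  let ext := extendZero' (𝔽 := 𝔽) ℓ U F hFU
  have hext0 : ∀ x (j : Fin n) (hj : j ∈ U), j ∉ F → E (ext x) j = 0 := by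
    intro x j hj hjF
    rw [hEres _ ⟨j, hj⟩]
    simp [ext, extendZero', hjF]
  have hextF : ∀ x (i : ↥F), E (ext x) i.1 = x i := by
    intro x i
    rw [hEres _ ⟨i.1, hFU i.2⟩]
    simp [ext, extendZero']
  let Ψ : (↥F → Fin ℓ → 𝔽) →ₗ[𝔽] (↥P → Fin β → 𝔽) :=
    LinearMap.pi fun p : ↥P => S.mulVecLin ∘ₗ (LinearMap.proj (p.1 : Fin n)) ∘ₗ E ∘ₗ ext
  have hΨ : ∀ x (p : ↥P), Ψ x p = S.mulVec (E (ext x) p.1) := fun x p => rfl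
  have hker : ∀ x, Ψ x = 0 → x = 0 := by
    intro x hx
    have hCx := hEC (ext x)
    have key : ∀ i : ↥F, E (ext x) i.1
        = g (fun j : ↥((U \ F) ∪ P) => S.mulVec (E (ext x) j.1)) i := hg _ hCx
    have hD : (fun j : ↥((U \ F) ∪ P) => S.mulVec (E (ext x) j.1)) = 0 := by
      funext j
      rcases Finset.mem_union.mp j.2 with hj | hj
      · obtain ⟨hjU, hjF⟩ := Finset.mem_sdiff.mp hj
        rw [hext0 x j.1 hjU hjF]
        simp
      · have := congrFun hx ⟨j.1, hj⟩
        rw [hΨ x ⟨j.1, hj⟩] at this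
        exact this
    funext i
    have h1 := key i
    rw [hD, map_zero] at h1
    have h2 := hextF x i
    rw [h1] at h2
    exact h2.symm
  have hinj : Function.Injective Ψ := by
    rw [← LinearMap.ker_eq_bot, eq_bot_iff]
    intro x hx
    exact hker x (LinearMap.mem_ker.mp hx)
  have hd1 : Module.finrank 𝔽 (↥F → Fin ℓ → 𝔽) = F.card * ℓ := by
    rw [Module.finrank_pi_fintype, Finset.sum_const, smul_eq_mul, Module.finrank_pi,
      Fintype.card_fin]
    congr 1
    exact Fintype.card_coe F
  have hd2 : Module.finrank 𝔽 (↥P → Fin β → 𝔽) = P.card * β := by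
    rw [Module.finrank_pi_fintype, Finset.sum_const, smul_eq_mul, Module.finrank_pi,
      Fintype.card_fin]
    congr 1
    exact Fintype.card_coe P
  have hsurj : Function.Surjective Ψ :=
    (LinearMap.injective_iff_surjective_of_finrank_eq_finrank (by rw [hd1, hd2, hdim])).mp hinj
  intro z
  obtain ⟨x, hx⟩ := hsurj z
  refine ⟨E (ext x), hEC _, fun j hj hjF => hext0 x j hj hjF, fun p hp => ?_⟩
  have := congrFun hx ⟨p, hp⟩
  rw [hΨ x ⟨p, hp⟩] at this
  exact this

lemma inv_aux' {n ℓ β : ℕ} {C : Submodule 𝔽 (Fin n → Fin ℓ → 𝔽)} {U F P : Finset (Fin n)}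
    (E : (↥U → Fin ℓ → 𝔽) →ₗ[𝔽] (Fin n → Fin ℓ → 𝔽))
    (hEuniq : ∀ x c, c ∈ C → (∀ i : ↥U, c i.1 = x i) → c = E x)
    {S : Matrix (Fin β) (Fin ℓ) 𝔽}
    (hFU : F ⊆ U)
    (hrep : IsRepairScheme C F ((U \ F) ∪ P) (fun _ => S))
    (hsurj : ∀ z : ↥P → Fin β → 𝔽, ∃ c, c ∈ C ∧ (∀ j ∈ U, j ∉ F → c j = 0) ∧
      ∀ (p : Fin n) (hp : p ∈ P), S.mulVec (c p) = z ⟨p, hp⟩)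
    {c : Fin n → Fin ℓ → 𝔽} (hc : c ∈ C) {f : Fin n} (hfF : f ∉ F)
    (hsupp : ∀ j ∈ U, j ≠ f → c j = 0) (hkerf : S.mulVec (c f) = 0) :
    ∀ p ∈ P, S.mulVec (c p) = 0 := by
  classical
  obtain ⟨g, hg⟩ := hrep
  obtain ⟨c', hc', hc'supp, hc'val⟩ := hsurj (fun p => S.mulVec (c p.1))
  have hgc : ∀ i : ↥F, c i.1
      = g (fun j : ↥((U \ F) ∪ P) => S.mulVec (c j.1)) i := hg _ hc
  have hgc' : ∀ i : ↥F, c' i.1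
      = g (fun j : ↥((U \ F) ∪ P) => S.mulVec (c' j.1)) i := hg _ hc'
  have hD : (fun j : ↥((U \ F) ∪ P) => S.mulVec (c' j.1))
      = (fun j : ↥((U \ F) ∪ P) => S.mulVec (c j.1)) := by
    funext j
    rcases Finset.mem_union.mp j.2 with hj | hj
    · obtain ⟨hjU, hjF⟩ := Finset.mem_sdiff.mp hj
      rw [hc'supp j.1 hjU hjF]
      by_cases hjf : j.1 = f
      · rw [hjf, hkerf]
        simp
      · rw [hsupp j.1 hjU hjf]
    · exact hc'val j.1 hj
  have hcF : ∀ i : ↥F, c i.1 = 0 := fun i =>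
    hsupp i.1 (hFU i.2) (fun he => hfF (he ▸ i.2))
  have hc'F : ∀ i : ↥F, c' i.1 = 0 := by
    intro i
    rw [hgc' i, hD, ← hgc i, hcF i]
  have hc'0 : c' = 0 := by
    have : c' = E 0 := hEuniq 0 c' hc' (fun u => by
      by_cases huF : u.1 ∈ F
      · exact hc'F ⟨u.1, huF⟩
      · exact hc'supp u.1 u.2 huF)
    rw [this, map_zero]
  intro p hp
  have h2 := hc'val p hp
  rw [hc'0] at h2
  simp only [Pi.zero_apply, Matrix.mulVec_zero] at h2
  exact h2.symm

/-- Lemma 3 of the paper: for an `(n,k,ℓ)` MDS array code with `(h,d)`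
optimal repair schemes with constant repair matrices `S F` for every `h`-subset of the
`k` systematic nodes, and pairwise disjoint `h`-subsets `F₁, …, F_t` of the systematic
nodes (`1 ≤ t ≤ ⌊k/h⌋`), we have `dim(∩ᵢ ⟨S_{Fᵢ}⟩) ≤ (h/(d-k+h))ᵗ · ℓ`. -/
theorem stmt9 [Fintype 𝔽] {n k ℓ h d β : ℕ}
    (C : Submodule 𝔽 (Fin n → Fin ℓ → 𝔽)) (hMDS : IsMDSArrayCode k C)
    (hh2 : 2 ≤ h) (hhr : h ≤ n - k) (hd1 : k + 1 ≤ d) (hd2 : d ≤ n - h)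
    (hβ : h * ℓ = (d - k + h) * β)
    (U : Finset (Fin n)) (hUcard : U.card = k) (hU : IsSystematicSet C U)
    (S : Finset (Fin n) → Matrix (Fin β) (Fin ℓ) 𝔽)
    (hS : ∀ F ⊆ U, F.card = h →
      ∀ R : Finset (Fin n), Disjoint R F → R.card = d →
        IsRepairScheme C F R (fun _ => S F))
    (t : ℕ) (ht1 : 1 ≤ t) (ht2 : t ≤ k / h)
    (Fam : Fin t → Finset (Fin n)) (hFamU : ∀ i, Fam i ⊆ U)
    (hcard : ∀ i, (Fam i).card = h)
    (hdisj : ∀ i j, i ≠ j → Disjoint (Fam i) (Fam j)) :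
    (Module.finrank 𝔽 ↥(⨅ i, rowSpace (S (Fam i))) : ℝ)
      ≤ ((h : ℝ) / ((d : ℝ) - k + h)) ^ t * ℓ := by
  classical
  have hh0 : 0 < h := by omega
  have hkh : h ≤ k := by
    have h1 : 1 ≤ k / h := le_trans ht1 ht2
    have := (Nat.one_le_div_iff hh0).mp h1
    omega
  have hkd : k ≤ d := by omega
  have hnk : k ≤ n := by omega
  have hdhn : d + h ≤ n := by omega
  set s := d - k + h with hsdef
  have hs0 : 0 < s := by omega
  have hscard : s ≤ Uᶜ.card := by
    rw [Finset.card_compl, hUcard, Fintype.card_fin]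
    omega
  obtain ⟨P, hPc, hPcard⟩ := Finset.exists_subset_card_eq hscard
  have hPU : Disjoint P U := Finset.disjoint_left.mpr
    (fun {a} haP haU => (Finset.mem_compl.mp (hPc haP)) haU)
  obtain ⟨E, hEC, hEres, hEuniq⟩ := exists_encoder' hU
  have hRdisj : ∀ i : Fin t, Disjoint ((U \ Fam i) ∪ P) (Fam i) := by
    intro i
    rw [Finset.disjoint_union_left]
    exact ⟨Finset.sdiff_disjoint, hPU.mono_right (hFamU i)⟩
  have hRcard : ∀ i : Fin t, ((U \ Fam i) ∪ P).card = d := by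
    intro i
    rw [Finset.card_union_of_disjoint (Finset.disjoint_of_subset_left Finset.sdiff_subset
      hPU.symm), Finset.card_sdiff_of_subset (hFamU i), hUcard, hcard i, hPcard]
    omega
  have hrep : ∀ i, IsRepairScheme C (Fam i) ((U \ Fam i) ∪ P) (fun _ => S (Fam i)) :=
    fun i => hS (Fam i) (hFamU i) (hcard i) _ (hRdisj i) (hRcard i)
  have hdimFP : ∀ i : Fin t, (Fam i).card * ℓ = P.card * β := by
    intro i
    rw [hcard i, hPcard]
    exact hβ
  have hsurj : ∀ i : Fin t, ∀ z : ↥P → Fin β → 𝔽, ∃ c, c ∈ C ∧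
      (∀ j ∈ U, j ∉ Fam i → c j = 0) ∧
      ∀ (p : Fin n) (hp : p ∈ P), (S (Fam i)).mulVec (c p) = z ⟨p, hp⟩ :=
    fun i => surj_aux' E hEC hEres (hFamU i) (hdimFP i) (hrep i)
  set K : Fin t → Submodule 𝔽 (Fin ℓ → 𝔽) :=
    (fun i => LinearMap.ker (S (Fam i)).mulVecLin) with hKdef
  set Y : ℕ → Submodule 𝔽 (Fin ℓ → 𝔽) :=
    (fun r => ⨆ i : Fin t, ⨆ _ : (i : ℕ) < r, K i) with hYdef
  have hKY : ∀ (i : Fin t) (r : ℕ), (i : ℕ) < r → K i ≤ Y r := by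
    intro i r hir
    rw [hYdef]
    exact le_iSup_of_le i (le_iSup_of_le hir le_rfl)
  -- the recursive step
  have hstep : ∀ r, r < t →
      s * Module.finrank 𝔽 ((Fin ℓ → 𝔽) ⧸ Y (r + 1))
        ≤ h * Module.finrank 𝔽 ((Fin ℓ → 𝔽) ⧸ Y r) := by
    intro r hr
    set a : Fin t := ⟨r, hr⟩ with hadef
    set Bm : ↥(Fam a) → ↥P → ((Fin ℓ → 𝔽) →ₗ[𝔽] (Fin ℓ → 𝔽)) := fun f p =>
      (LinearMap.proj p.1) ∘ₗ E ∘ₗ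
        (LinearMap.single 𝔽 (fun _ : ↥U => Fin ℓ → 𝔽) ⟨f.1, hFamU a f.2⟩) with hBmdef
    have hBm_apply : ∀ f p y,
        Bm f p y = E (Pi.single (⟨f.1, hFamU a f.2⟩ : ↥U) y) p.1 := fun _ _ _ => rfl
    have hBmK : ∀ (i : Fin t), i ≠ a → ∀ f p y, y ∈ K i → Bm f p y ∈ K i := by
      intro i hia f p y hy
      have hfU : f.1 ∈ U := hFamU a f.2
      have hfFi : f.1 ∉ Fam i := fun hmem =>
        Finset.disjoint_left.mp (hdisj a i (fun he => hia he.symm)) f.2 hmem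
      have hy0 : (S (Fam i)).mulVec y = 0 := by
        have := LinearMap.mem_ker.mp hy
        rwa [Matrix.mulVecLin_apply] at this
      have hxsame : (Pi.single ⟨f.1, hfU⟩ y : ↥U → Fin ℓ → 𝔽) ⟨f.1, hfU⟩ = y :=
        Pi.single_eq_same _ _
      have hxne : ∀ (j : Fin n) (hjU : j ∈ U), j ≠ f.1 →
          (Pi.single ⟨f.1, hfU⟩ y : ↥U → Fin ℓ → 𝔽) ⟨j, hjU⟩ = 0 := by
        intro j hjU hjf
        exact @Pi.single_eq_of_ne ↥U (fun _ => Fin ℓ → 𝔽) _ _ ⟨f.1, hfU⟩ ⟨j, hjU⟩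
          (fun he => hjf (congrArg Subtype.val he)) y
      have hmain := inv_aux' E hEuniq (hFamU i) (hrep i) (hsurj i)
        (hEC (Pi.single ⟨f.1, hfU⟩ y : ↥U → Fin ℓ → 𝔽)) hfFi
        (fun j hjU hjf => by
          rw [hEres (Pi.single ⟨f.1, hfU⟩ y : ↥U → Fin ℓ → 𝔽) ⟨j, hjU⟩]
          exact hxne j hjU hjf)
        (by rw [hEres (Pi.single ⟨f.1, hfU⟩ y : ↥U → Fin ℓ → 𝔽) ⟨f.1, hfU⟩, hxsame]
            exact hy0)
      rw [LinearMap.mem_ker, Matrix.mulVecLin_apply, hBm_apply]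
      exact hmain p.1 p.2
    have hBmY : ∀ f p, ∀ y ∈ Y r, Bm f p y ∈ Y (r + 1) := by
      intro f p
      have hc : Y r ≤ Submodule.comap (Bm f p) (Y (r + 1)) := by
        rw [hYdef]
        refine iSup_le fun i => iSup_le fun hir => fun y hy => ?_
        have hia : i ≠ a := by
          intro hia
          rw [hia] at hir
          simp [hadef] at hir
        exact Submodule.mem_comap.mpr (hKY i (r + 1) (by omega) (hBmK i hia f p y hy))
      exact fun y hy => hc hy
    set m : ↥(Fam a) → ↥P →
        (((Fin ℓ → 𝔽) ⧸ Y r) →ₗ[𝔽] ((Fin ℓ → 𝔽) ⧸ Y (r + 1))) := fun f p =>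
      Submodule.liftQ (Y r) ((Y (r + 1)).mkQ ∘ₗ Bm f p) (by
        intro y hy
        rw [LinearMap.mem_ker, LinearMap.comp_apply, Submodule.mkQ_apply,
          Submodule.Quotient.mk_eq_zero]
        exact hBmY f p y hy) with hmdef
    have hm_apply : ∀ f p x, m f p (Submodule.Quotient.mk x)
        = Submodule.Quotient.mk (Bm f p x) := by
      intro f p x
      rw [hmdef]
      exact Submodule.liftQ_apply _ _ _
    set Ξ : (↥(Fam a) → (Fin ℓ → 𝔽) ⧸ Y r) →ₗ[𝔽] (↥P → (Fin ℓ → 𝔽) ⧸ Y (r + 1)) :=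
      LinearMap.pi (fun p => ∑ f : ↥(Fam a), (m f p) ∘ₗ LinearMap.proj f) with hΞdef
    have hΞsurj : Function.Surjective Ξ := by
      intro z'
      choose w hw using fun p : ↥P => Submodule.Quotient.mk_surjective (Y (r + 1)) (z' p)
      obtain ⟨c, hcC, hcsupp, hcval⟩ := hsurj a (fun p => (S (Fam a)).mulVec (w p))
      refine ⟨fun f => Submodule.Quotient.mk (c f.1), ?_⟩
      funext p
      have hXc : (∑ f : ↥(Fam a), Pi.single (⟨f.1, hFamU a f.2⟩ : ↥U) (c f.1))
          = fun u : ↥U => c u.1 := by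
        funext u
        rw [Finset.sum_apply]
        by_cases hu : u.1 ∈ Fam a
        · rw [Finset.sum_eq_single (⟨u.1, hu⟩ : ↥(Fam a))]
          · have he : (⟨(⟨u.1, hu⟩ : ↥(Fam a)).1, hFamU a (⟨u.1, hu⟩ : ↥(Fam a)).2⟩ : ↥U)
                = u := Subtype.ext rfl
            rw [he, Pi.single_eq_same]
          · intro f _ hfu
            refine Pi.single_eq_of_ne (fun he => hfu ?_) _
            have h3 : u.1 = f.1 := congrArg Subtype.val he
            exact (Subtype.ext h3.symm)
          · intro hmem
            exact absurd (Finset.mem_univ _) hmem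
        · rw [Finset.sum_eq_zero, (hcsupp u.1 u.2 hu)]
          intro f _
          refine Pi.single_eq_of_ne (fun he => hu ?_) _
          have h3 : u.1 = f.1 := congrArg Subtype.val he
          rw [h3]
          exact f.2
      have hEc : E (fun u : ↥U => c u.1) = c := (hEuniq _ c hcC (fun _ => rfl)).symm
      have hsum : (∑ f : ↥(Fam a), Bm f p (c f.1)) = c p.1 := by
        have h4 : (∑ f : ↥(Fam a), Bm f p (c f.1))
            = E (∑ f : ↥(Fam a), Pi.single (⟨f.1, hFamU a f.2⟩ : ↥U) (c f.1)) p.1 := by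
          rw [map_sum, Finset.sum_apply]
          rfl
        rw [h4, hXc, hEc]
      have hΞval : Ξ (fun f => Submodule.Quotient.mk (c f.1)) p
          = Submodule.Quotient.mk (c p.1) := by
        calc Ξ (fun f => Submodule.Quotient.mk (c f.1)) p
            = ∑ f : ↥(Fam a), m f p (Submodule.Quotient.mk (c f.1)) := by
              rw [hΞdef, LinearMap.pi_apply, LinearMap.sum_apply]
              exact Finset.sum_congr rfl fun f _ => rfl
          _ = ∑ f : ↥(Fam a), (Y (r + 1)).mkQ (Bm f p (c f.1)) := by
              refine Finset.sum_congr rfl fun f _ => ?_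
              rw [hm_apply, Submodule.mkQ_apply]
          _ = (Y (r + 1)).mkQ (∑ f : ↥(Fam a), Bm f p (c f.1)) := (map_sum _ _ _).symm
          _ = Submodule.Quotient.mk (c p.1) := by rw [hsum, Submodule.mkQ_apply]
      rw [hΞval, ← hw p, Submodule.Quotient.eq]
      apply hKY a (r + 1) (by simp [hadef])
      rw [hKdef, LinearMap.mem_ker, map_sub, Matrix.mulVecLin_apply, Matrix.mulVecLin_apply,
        hcval p.1 p.2, sub_self]
    have hle : Module.finrank 𝔽 (↥P → (Fin ℓ → 𝔽) ⧸ Y (r + 1))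
        ≤ Module.finrank 𝔽 (↥(Fam a) → (Fin ℓ → 𝔽) ⧸ Y r) := by
      have h1 : LinearMap.range Ξ = ⊤ := LinearMap.range_eq_top.mpr hΞsurj
      calc Module.finrank 𝔽 (↥P → (Fin ℓ → 𝔽) ⧸ Y (r + 1))
          = Module.finrank 𝔽 ↥(LinearMap.range Ξ) := by rw [h1, finrank_top]
        _ ≤ _ := LinearMap.finrank_range_le Ξ
    rw [Module.finrank_pi_fintype, Module.finrank_pi_fintype, Finset.sum_const,
      Finset.sum_const, smul_eq_mul, smul_eq_mul, Finset.card_univ, Finset.card_univ,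
      Fintype.card_coe, Fintype.card_coe, hPcard, hcard a] at hle
    exact hle
  -- base case and induction
  have hpi : Module.finrank 𝔽 (Fin ℓ → 𝔽) = ℓ := by
    rw [Module.finrank_pi, Fintype.card_fin]
  have hY0 : Y 0 = ⊥ := by
    rw [hYdef]
    exact le_antisymm (iSup_le fun i => iSup_le fun hir => absurd hir (Nat.not_lt_zero _))
      bot_le
  have hq0 : Module.finrank 𝔽 ((Fin ℓ → 𝔽) ⧸ Y 0) = ℓ := by
    have h1 := Submodule.finrank_quotient_add_finrank (Y 0)
    have h2 : Module.finrank 𝔽 ↥(Y 0) = 0 := by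
      rw [hY0]
      exact finrank_bot 𝔽 _
    rw [h2, hpi] at h1
    omega
  have hind : ∀ r, r ≤ t →
      s ^ r * Module.finrank 𝔽 ((Fin ℓ → 𝔽) ⧸ Y r) ≤ h ^ r * ℓ := by
    intro r
    induction r with
    | zero => intro _; simpa using le_of_eq hq0
    | succ r ih =>
      intro hrt
      have h1 := hstep r (by omega)
      have h2 := ih (by omega)
      calc s ^ (r + 1) * Module.finrank 𝔽 ((Fin ℓ → 𝔽) ⧸ Y (r + 1))
          = s ^ r * (s * Module.finrank 𝔽 ((Fin ℓ → 𝔽) ⧸ Y (r + 1))) := by ring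
        _ ≤ s ^ r * (h * Module.finrank 𝔽 ((Fin ℓ → 𝔽) ⧸ Y r)) := Nat.mul_le_mul_left _ h1
        _ = h * (s ^ r * Module.finrank 𝔽 ((Fin ℓ → 𝔽) ⧸ Y r)) := by ring
        _ ≤ h * (h ^ r * ℓ) := Nat.mul_le_mul_left _ h2
        _ = h ^ (r + 1) * ℓ := by ring
  -- duality: relate the intersection of row spaces to the quotient by Y t
  set W := ⨅ i, rowSpace (S (Fam i)) with hWdef
  let eL : (Fin ℓ → 𝔽) →ₗ[𝔽] Module.Dual 𝔽 (Fin ℓ → 𝔽) :=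
    { toFun := fun y =>
        { toFun := fun x => x ⬝ᵥ y
          map_add' := fun a b => add_dotProduct a b y
          map_smul' := fun r a => by simp [smul_dotProduct] }
      map_add' := fun y z => LinearMap.ext fun x => dotProduct_add x y z
      map_smul' := fun r y => LinearMap.ext fun x => by simp [dotProduct_smul] }
  have heL : Function.Injective eL := by
    intro y z hyz
    funext j
    have h1 := congrArg (fun φ : Module.Dual 𝔽 (Fin ℓ → 𝔽) => φ (Pi.single j 1)) hyz
    simpa [eL, single_dotProduct] using h1
  have hmaple : Submodule.map eL (Y t) ≤ W.dualAnnihilator := by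
    rw [Submodule.map_le_iff_le_comap, hYdef]
    refine iSup_le fun i => iSup_le fun _ => fun y hy => ?_
    refine Submodule.mem_comap.mpr ((Submodule.mem_dualAnnihilator _).mpr ?_)
    intro v hv
    have hvi : v ∈ rowSpace (S (Fam i)) := by
      rw [hWdef] at hv
      exact (Submodule.mem_iInf _).mp hv i
    have hy0 : (S (Fam i)).mulVec y = 0 := by
      have := LinearMap.mem_ker.mp hy
      rwa [Matrix.mulVecLin_apply] at this
    have hdot : ∀ (v' : Fin ℓ → 𝔽), v' ∈ rowSpace (S (Fam i)) → v' ⬝ᵥ y = 0 := by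
      intro v' hv'
      refine Submodule.span_induction ?_ ?_ ?_ ?_ hv'
      · rintro w' ⟨b, rfl⟩
        have := congrFun hy0 b
        simpa [Matrix.mulVec, dotProduct] using this
      · exact zero_dotProduct y
      · intro w1 w2 _ _ e1 e2
        rw [add_dotProduct, e1, e2, add_zero]
      · intro q w1 _ e1
        rw [smul_dotProduct, e1, smul_zero]
    exact hdot v hvi
  have hfrY : Module.finrank 𝔽 ↥(Y t) ≤ Module.finrank 𝔽 ((Fin ℓ → 𝔽) ⧸ W) := by
    calc Module.finrank 𝔽 ↥(Y t)
        = Module.finrank 𝔽 ↥(Submodule.map eL (Y t)) :=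
          (Submodule.equivMapOfInjective eL heL (Y t)).finrank_eq
      _ ≤ Module.finrank 𝔽 ↥W.dualAnnihilator := Submodule.finrank_mono hmaple
      _ = Module.finrank 𝔽 ((Fin ℓ → 𝔽) ⧸ W) :=
          ((Subspace.quotEquivAnnihilator W).finrank_eq).symm
  have hq1 := Submodule.finrank_quotient_add_finrank W
  have hq2 := Submodule.finrank_quotient_add_finrank (Y t)
  rw [hpi] at hq1 hq2
  have hWq : Module.finrank 𝔽 ↥W ≤ Module.finrank 𝔽 ((Fin ℓ → 𝔽) ⧸ Y t) := by omega
  have hmain : s ^ t * Module.finrank 𝔽 ↥W ≤ h ^ t * ℓ :=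
    le_trans (Nat.mul_le_mul_left _ hWq) (hind t le_rfl)
  -- final casting
  have hcast : (d : ℝ) - k + h = (s : ℝ) := by
    rw [hsdef]
    push_cast [hkd]
    ring
  have hsR : (0 : ℝ) < (s : ℝ) ^ t := by
    have : (0 : ℝ) < (s : ℝ) := by exact_mod_cast hs0
    positivity
  rw [hcast, div_pow, div_mul_eq_mul_div, le_div_iff₀ hsR]
  calc (Module.finrank 𝔽 ↥W : ℝ) * (s : ℝ) ^ t
      = ((s ^ t * Module.finrank 𝔽 ↥W : ℕ) : ℝ) := by push_cast; ring
    _ ≤ ((h ^ t * ℓ : ℕ) : ℝ) := Nat.cast_le.mpr hmain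
    _ = (h : ℝ) ^ t * ℓ := by push_cast; ring
end
end

section
/- Let h, c, s be integers with h ≥ 2, 1 ≤ c ≤ ⌊h/2⌋, and s ≥ h+1. Define the sequence {B_n} of rationals (or reals) by B_0 = 1, B_1 = h/s, and B_{n+2} = ((h−c)/s)·B_{n+1} + (c/s)·B_n for all n ≥ 0. Set Δ = ((h−c)/s)² + 4c/s and α = ((c−h) + s√Δ)/(2c). Then for every n ≥ 0, B_n ≤ (4/√Δ)·α^{−n}. -/
/-! `B_n` satisfies `B_{n+2} = p B_{n+1} + q B_n` with `p = (h-c)/s ≥ 0`, `q = c/s > 0` and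
`p + q = h/s < 1`. Its dominant characteristic root `L = (p + √Δ)/2` is `α⁻¹`, and since the
coefficients are nonnegative, any bound `B_n ≤ K L^n` propagates from `n, n+1` to `n+2` because
`L² = pL + q`. The two initial bounds with `K = 4/√Δ` hold because `√Δ ≤ 2 - p`. -/

open Real

theorem le_mul_pow_of_two_step {p q L K : ℝ} (hp : 0 ≤ p) (hq : 0 ≤ q) (hL : L ^ 2 = p * L + q)
    {B : ℕ → ℝ} (hrec : ∀ n, B (n + 2) = p * B (n + 1) + q * B n)
    (h0 : B 0 ≤ K) (h1 : B 1 ≤ K * L) (n : ℕ) : B n ≤ K * L ^ n := by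
  induction n using Nat.twoStepInduction with
  | zero => simpa using h0
  | one => simpa using h1
  | more n ih0 ih1 =>
    calc B (n + 2) = p * B (n + 1) + q * B n := hrec n
      _ ≤ p * (K * L ^ (n + 1)) + q * (K * L ^ n) := by gcongr
      _ = K * L ^ n * (p * L + q) := by ring
      _ = K * L ^ (n + 2) := by rw [← hL]; ring

noncomputable def dominantRoot (p q : ℝ) : ℝ := (p + √(p ^ 2 + 4 * q)) / 2

theorem dominantRoot_sq {p q : ℝ} (hΔ : 0 ≤ p ^ 2 + 4 * q) :
    dominantRoot p q ^ 2 = p * dominantRoot p q + q := by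
  have hr := sq_sqrt hΔ
  unfold dominantRoot
  linear_combination hr / 4

theorem inv_dominantRoot {p q : ℝ} (hΔ : 0 ≤ p ^ 2 + 4 * q) (hq : q ≠ 0) :
    (dominantRoot p q)⁻¹ = (√(p ^ 2 + 4 * q) - p) / (2 * q) := by
  have hr := sq_sqrt hΔ
  refine inv_eq_of_mul_eq_one_right ?_
  unfold dominantRoot
  field_simp
  linear_combination hr

theorem sqrt_discrim_le {p q : ℝ} (hq : 0 ≤ q) (hpq : p + q ≤ 1) :
    √(p ^ 2 + 4 * q) ≤ 2 - p :=
  sqrt_le_iff.mpr ⟨by linarith, by nlinarith⟩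

theorem le_div_sqrt_discrim_mul_dominantRoot_pow {p q : ℝ} (hp : 0 ≤ p) (hq : 0 < q)
    (hpq : p + q ≤ 1) {B : ℕ → ℝ} (hB0 : B 0 = 1) (hB1 : B 1 = p + q)
    (hrec : ∀ n, B (n + 2) = p * B (n + 1) + q * B n) (n : ℕ) :
    B n ≤ 4 / √(p ^ 2 + 4 * q) * dominantRoot p q ^ n := by
  have hΔ : 0 < p ^ 2 + 4 * q := by positivity
  have hr : 0 < √(p ^ 2 + 4 * q) := sqrt_pos.mpr hΔ
  have hr2 := sqrt_discrim_le hq.le hpq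
  refine le_mul_pow_of_two_step hp hq.le (dominantRoot_sq hΔ.le) hrec ?_ ?_ n
  · rw [hB0, le_div_iff₀ hr]
    linarith
  · rw [hB1, dominantRoot, div_mul_div_comm, le_div_iff₀ (by positivity)]
    nlinarith

theorem stmt14_general (h c s : ℕ) (hc1 : 1 ≤ c) (hc2 : c ≤ h / 2) (hs : h + 1 ≤ s)
    (B : ℕ → ℝ) (hB0 : B 0 = 1) (hB1 : B 1 = (h : ℝ) / s)
    (hBrec : ∀ n, B (n + 2) = ((h : ℝ) - c) / s * B (n + 1) + (c : ℝ) / s * B n)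
    (Δ α : ℝ)
    (hΔ : Δ = (((h : ℝ) - c) / s) ^ 2 + 4 * c / s)
    (hα : α = (((c : ℝ) - h) + s * Real.sqrt Δ) / (2 * c)) :
    ∀ n : ℕ, B n ≤ 4 / Real.sqrt Δ * (α ^ n)⁻¹ := by
  have hc : (0 : ℝ) < c := by exact_mod_cast hc1
  have hch : (c : ℝ) ≤ h := by exact_mod_cast hc2.trans (Nat.div_le_self h 2)
  have hhs : (h : ℝ) + 1 ≤ s := by exact_mod_cast hs
  have hs0 : (0 : ℝ) < s := by linarith
  rw [mul_div_assoc] at hΔ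
  set p := ((h : ℝ) - c) / s
  set q := (c : ℝ) / s
  have hp : 0 ≤ p := div_nonneg (by linarith) hs0.le
  have hq : 0 < q := div_pos hc hs0
  have hpq : p + q = h / s := by simp only [p, q]; field_simp; ring
  have hpq1 : p + q ≤ 1 := by rw [hpq, div_le_one hs0]; linarith
  have hαL : α = (dominantRoot p q)⁻¹ := by
    rw [inv_dominantRoot (by positivity) hq.ne', ← hΔ, hα]
    simp only [p, q]
    field_simp
    ring
  intro n
  rw [hαL, inv_pow, inv_inv, hΔ]
  exact le_div_sqrt_discrim_mul_dominantRoot_pow hp hq hpq1 hB0 (hB1.trans hpq.symm) hBrec n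

/-- for integers `h ≥ 2`, `1 ≤ c ≤ ⌊h/2⌋`, `s ≥ h+1`, the sequence
`B₀ = 1`, `B₁ = h/s`, `B_{n+2} = ((h-c)/s)·B_{n+1} + (c/s)·B_n` satisfies
`B_n ≤ (4/√Δ)·α⁻ⁿ`, where `Δ = ((h-c)/s)² + 4c/s` and `α = ((c-h)+s√Δ)/(2c)`. -/
theorem stmt14 (h c s : ℕ) (hh : 2 ≤ h) (hc1 : 1 ≤ c) (hc2 : c ≤ h / 2) (hs : h + 1 ≤ s)
    (B : ℕ → ℝ) (hB0 : B 0 = 1) (hB1 : B 1 = (h : ℝ) / s)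
    (hBrec : ∀ n, B (n + 2) = ((h : ℝ) - c) / s * B (n + 1) + (c : ℝ) / s * B n)
    (Δ α : ℝ)
    (hΔ : Δ = (((h : ℝ) - c) / s) ^ 2 + 4 * c / s)
    (hα : α = (((c : ℝ) - h) + s * Real.sqrt Δ) / (2 * c)) :
    ∀ n : ℕ, B n ≤ 4 / Real.sqrt Δ * (α ^ n)⁻¹ :=
  stmt14_general h c s hc1 hc2 hs B hB0 hB1 hBrec Δ α hΔ hα
end

section
/- Let d, k, h, ℓ be positive integers with h ≤ k and k − h < d. Let R be a finite set of size d and let β : R → ℝ be a function such that for every subset M ⊆ R with |M| = k − h, Σ_{j ∈ R∖M} β_j ≥ hℓ. Then Σ_{j ∈ R} β_j ≥ dhℓ/(d−k+h). Moreover, if in addition k > h and Σ_{j ∈ R} β_j = dhℓ/(d−k+h), then β_j = hℓ/(d−k+h) for every j ∈ R. -/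
/-- combinatorial core of the cut-set bound, Appendix A of the paper:
if every `(k-h)`-subset `M` of the `d`-element helper set `R` satisfies
`∑_{j ∈ R∖M} β_j ≥ hℓ`, then `∑_{j ∈ R} β_j ≥ dhℓ/(d-k+h)`; moreover if `k > h` and
equality holds then `β_j = hℓ/(d-k+h)` for all `j ∈ R`. -/
theorem stmt15 {ι : Type*} [DecidableEq ι] (d k h ℓ : ℕ)
    (hd : 0 < d) (hk : 0 < k) (hh : 0 < h) (hℓ : 0 < ℓ)
    (hhk : h ≤ k) (hkd : k - h < d)
    (R : Finset ι) (hR : R.card = d) (β : ι → ℝ)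
    (hyp : ∀ M ⊆ R, M.card = k - h → (h : ℝ) * ℓ ≤ ∑ j ∈ R \ M, β j) :
    ((d : ℝ) * h * ℓ / ((d : ℝ) - k + h) ≤ ∑ j ∈ R, β j) ∧
    (h < k → (∑ j ∈ R, β j) = (d : ℝ) * h * ℓ / ((d : ℝ) - k + h) →
      ∀ j ∈ R, β j = (h : ℝ) * ℓ / ((d : ℝ) - k + h)) := by
  classical
  set m : ℕ := k - h with hm
  have hmd : m < d := hkd
  have hcast : (d : ℝ) - k + h = (d : ℝ) - m := by
    rw [hm, Nat.cast_sub hhk]; ring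
  have hdm : (0 : ℝ) < (d : ℝ) - m := by
    have : (m : ℝ) < d := by exact_mod_cast hmd
    linarith
  -- choose a maximizing M
  obtain ⟨M, hMmem, hMmax⟩ :=
    Finset.exists_max_image (R.powersetCard m) (fun M => ∑ j ∈ M, β j)
      (Finset.powersetCard_nonempty.2 (by rw [hR]; exact hmd.le))
  obtain ⟨hMR, hMcard⟩ := Finset.mem_powersetCard.1 hMmem
  -- swap argument: every element of M dominates every element of R \ M
  have swap : ∀ j ∈ M, ∀ i ∈ R \ M, β i ≤ β j := by
    intro j hj i hi
    obtain ⟨hiR, hiM⟩ := Finset.mem_sdiff.1 hi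
    set M' : Finset ι := insert i (M.erase j) with hM'
    have hiMe : i ∉ M.erase j := fun hc => hiM (Finset.mem_of_mem_erase hc)
    have hM'card : M'.card = m := by
      have hpos : 0 < M.card := Finset.card_pos.2 ⟨j, hj⟩
      rw [hM', Finset.card_insert_of_notMem hiMe, Finset.card_erase_of_mem hj, hMcard]
      rw [hMcard] at hpos
      omega
    have hM'R : M' ⊆ R := by
      intro x hx
      rcases Finset.mem_insert.1 hx with rfl | hx
      · exact hiR
      · exact hMR (Finset.mem_of_mem_erase hx)
    have hle := hMmax M' (Finset.mem_powersetCard.2 ⟨hM'R, hM'card⟩)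
    have h1 : ∑ x ∈ M', β x = β i + (∑ x ∈ M, β x - β j) := by
      rw [hM', Finset.sum_insert hiMe, Finset.sum_erase_eq_sub hj]
    simp only [h1] at hle
    linarith
  have hsdc : (R \ M).card = d - m := by
    rw [Finset.card_sdiff_of_subset hMR, hR, hMcard]
  have hRMsum : (h : ℝ) * ℓ ≤ ∑ j ∈ R \ M, β j := hyp M hMR hMcard
  -- each element of M is at least hℓ/(d-m)
  have hMbig : ∀ j ∈ M, (h : ℝ) * ℓ / ((d : ℝ) - m) ≤ β j := by
    intro j hj
    have h1 : ∑ i ∈ R \ M, β i ≤ (R \ M).card • β j :=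
      Finset.sum_le_card_nsmul _ _ _ (fun i hi => swap j hj i hi)
    rw [hsdc] at h1
    have h2 : ((d - m : ℕ) : ℝ) = (d : ℝ) - m := by
      rw [Nat.cast_sub (le_of_lt hmd)]
    rw [nsmul_eq_mul, h2] at h1
    rw [div_le_iff₀ hdm]
    nlinarith
  have hMsum : (m : ℝ) * ((h : ℝ) * ℓ / ((d : ℝ) - m)) ≤ ∑ j ∈ M, β j := by
    have := Finset.card_nsmul_le_sum M β _ hMbig
    rwa [hMcard, nsmul_eq_mul] at this
  have hsplit : ∑ j ∈ R \ M, β j + ∑ j ∈ M, β j = ∑ j ∈ R, β j :=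
    Finset.sum_sdiff hMR
  have hbound : (d : ℝ) * h * ℓ / ((d : ℝ) - k + h) ≤ ∑ j ∈ R, β j := by
    rw [hcast]
    have : (d : ℝ) * h * ℓ / ((d : ℝ) - m)
        = (h : ℝ) * ℓ + (m : ℝ) * ((h : ℝ) * ℓ / ((d : ℝ) - m)) := by
      field_simp; ring
    rw [this]
    linarith
  refine ⟨hbound, fun hhk' heq j hjR => ?_⟩
  rw [hcast] at heq ⊢
  set c : ℝ := (h : ℝ) * ℓ / ((d : ℝ) - m) with hc
  have hm1 : 1 ≤ m := by omega
  -- sum over M equals m * c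
  have hMsum' : ∑ j ∈ M, β j = (m : ℝ) * c := by
    have h1 : ∑ j ∈ M, β j ≤ (m : ℝ) * c := by
      have : ∑ j ∈ M, β j = ∑ j ∈ R, β j - ∑ j ∈ R \ M, β j := by linarith
      rw [this, heq]
      have : (d : ℝ) * h * ℓ / ((d : ℝ) - m) - (h : ℝ) * ℓ = (m : ℝ) * c := by
        rw [hc]; field_simp; ring
      linarith
    linarith
  -- each j in M equals c
  have hMeq : ∀ j ∈ M, β j = c := by
    intro j hj
    by_contra hne
    have hlt : c < β j := lt_of_le_of_ne (hMbig j hj) (Ne.symm hne)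
    have h1 : ∑ i ∈ M, c < ∑ i ∈ M, β i :=
      Finset.sum_lt_sum (fun i hi => hMbig i hi) ⟨j, hj, hlt⟩
    rw [Finset.sum_const, hMcard, nsmul_eq_mul] at h1
    linarith [hMsum'.ge]
  -- M is nonempty; every element of R \ M is at most c
  obtain ⟨j₀, hj₀⟩ := Finset.card_pos.1 (show 0 < M.card by omega)
  have hsmall : ∀ i ∈ R \ M, β i ≤ c := fun i hi => (hMeq j₀ hj₀) ▸ swap j₀ hj₀ i hi
  have hRMsum' : ∑ i ∈ R \ M, β i = ((d : ℝ) - m) * c := by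
    have h1 : ∑ i ∈ R \ M, β i ≤ ((d : ℝ) - m) * c := by
      have := Finset.sum_le_card_nsmul (R \ M) β c hsmall
      rw [hsdc, nsmul_eq_mul, Nat.cast_sub (le_of_lt hmd)] at this
      exact this
    have h2 : ((d : ℝ) - m) * c = (h : ℝ) * ℓ := by
      rw [hc]; field_simp
    linarith
  have hRMeq : ∀ i ∈ R \ M, β i = c := by
    intro i hi
    by_contra hne
    have hlt : β i < c := lt_of_le_of_ne (hsmall i hi) hne
    have h1 : ∑ x ∈ R \ M, β x < ∑ x ∈ R \ M, c :=
      Finset.sum_lt_sum (fun x hx => hsmall x hx) ⟨i, hi, hlt⟩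
    rw [Finset.sum_const, hsdc, nsmul_eq_mul, Nat.cast_sub (le_of_lt hmd)] at h1
    linarith [hRMsum'.le]
  by_cases hjM : j ∈ M
  · exact hMeq j hjM
  · exact hRMeq j (Finset.mem_sdiff.2 ⟨hjR, hjM⟩)
end

section
/- Let F_q be a finite field, ℓ ≥ 1 an integer, θ a real number with 0 < θ < 1, s a positive integer, and V_1,…,V_m subspaces of F_q^ℓ such that: (i) each V_i contains at least s of the standard basis vectors e_1,…,e_ℓ, and (ii) for every nonempty subset E ⊆ {1,…,m}, dim( ∩_{i∈E} V_i ) ≤ θ^{|E|}·ℓ. Then m·s ≤ ℓ·⌊log_{1/θ} ℓ⌋. -/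
/-- the bipartite double-counting argument: if each subspace
`V i ≤ 𝔽^ℓ` contains at least `s` standard basis vectors, and every nonempty family of
the `Vᵢ` has intersection of dimension at most `θ^{|E|}·ℓ`, then
`m·s ≤ ℓ·⌊log_{1/θ} ℓ⌋`. -/
theorem stmt16 {𝔽 : Type*} [Field 𝔽] [Fintype 𝔽] (ℓ m s : ℕ) (hℓ : 1 ≤ ℓ)
    (θ : ℝ) (hθ0 : 0 < θ) (hθ1 : θ < 1) (hs : 0 < s)
    (V : Fin m → Submodule 𝔽 (Fin ℓ → 𝔽))
    (hi : ∀ i, s ≤ {j : Fin ℓ | (Pi.single j 1 : Fin ℓ → 𝔽) ∈ V i}.ncard)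
    (hii : ∀ E : Finset (Fin m), E.Nonempty →
      (Module.finrank 𝔽 ↥(⨅ i ∈ E, V i) : ℝ) ≤ θ ^ E.card * ℓ) :
    m * s ≤ ℓ * ⌊Real.logb (1 / θ) ℓ⌋₊ := by
  classical
  set B := ⌊Real.logb (1 / θ) ℓ⌋₊ with hB
  have hb : (1:ℝ) < 1 / θ := one_lt_one_div hθ0 hθ1
  -- columns bound
  have hcol : ∀ j : Fin ℓ,
      (Finset.univ.filter fun i : Fin m => (Pi.single j 1 : Fin ℓ → 𝔽) ∈ V i).card ≤ B := by
    intro j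
    set E := Finset.univ.filter fun i : Fin m => (Pi.single j 1 : Fin ℓ → 𝔽) ∈ V i with hE
    rcases E.eq_empty_or_nonempty with h | h
    · simp [h]
    · have hmem : (Pi.single j 1 : Fin ℓ → 𝔽) ∈ ⨅ i ∈ E, V i := by
        simp only [Submodule.mem_iInf]
        intro i hiE
        have := Finset.mem_filter.mp hiE
        exact this.2
      have hne : (Pi.single j 1 : Fin ℓ → 𝔽) ≠ 0 := by
        intro h0
        have := congrFun h0 j
        simp at this
      have hpos : 0 < Module.finrank 𝔽 ↥(⨅ i ∈ E, V i) := by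
        rw [Module.finrank_pos_iff_exists_ne_zero]
        exact ⟨⟨_, hmem⟩, by simpa [Submodule.mk_eq_zero] using hne⟩
      have h1 : (1:ℝ) ≤ θ ^ E.card * ℓ :=
        le_trans (by exact_mod_cast hpos) (hii E h)
      have hpow : (1 / θ) ^ E.card ≤ (ℓ:ℝ) := by
        rw [div_pow, one_pow, div_le_iff₀ (pow_pos hθ0 _)]
        linarith [h1, mul_comm (θ ^ E.card) (ℓ:ℝ)]
      have hlog : (E.card : ℝ) ≤ Real.logb (1 / θ) ℓ := by
        rw [Real.le_logb_iff_rpow_le hb (by exact_mod_cast Nat.lt_of_lt_of_le zero_lt_one hℓ)]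
        rw [Real.rpow_natCast]
        exact hpow
      exact Nat.le_floor hlog
  -- rows bound
  have hrow : ∀ i : Fin m,
      s ≤ (Finset.univ.filter fun j : Fin ℓ => (Pi.single j 1 : Fin ℓ → 𝔽) ∈ V i).card := by
    intro i
    have := hi i
    rwa [Set.ncard_eq_toFinset_card', Set.toFinset_setOf] at this
  -- double counting
  calc m * s = ∑ _i : Fin m, s := by simp [mul_comm]
    _ ≤ ∑ i : Fin m,
        (Finset.univ.filter fun j : Fin ℓ => (Pi.single j 1 : Fin ℓ → 𝔽) ∈ V i).card :=
        Finset.sum_le_sum fun i _ => hrow i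
    _ = ∑ i : Fin m, ∑ j : Fin ℓ, if (Pi.single j 1 : Fin ℓ → 𝔽) ∈ V i then 1 else 0 :=
        Finset.sum_congr rfl fun i _ => Finset.card_filter _ _
    _ = ∑ j : Fin ℓ, ∑ i : Fin m, if (Pi.single j 1 : Fin ℓ → 𝔽) ∈ V i then 1 else 0 :=
        Finset.sum_comm
    _ = ∑ j : Fin ℓ,
        (Finset.univ.filter fun i : Fin m => (Pi.single j 1 : Fin ℓ → 𝔽) ∈ V i).card :=
        Finset.sum_congr rfl fun j _ => (Finset.card_filter _ _).symm
    _ ≤ ∑ _j : Fin ℓ, B := Finset.sum_le_sum fun j _ => hcol j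
    _ = ℓ * B := by simp [mul_comm]
end

section
/- Let h and s be real numbers with 0 < h < s. Set c = h/2, Δ = ((h−c)/s)² + 4c/s, and α = ((c−h) + s√Δ)/(2c). Then α² > s/h. -/
/-- for `0 < h < s`, with `c = h/2`,
`Δ = ((h-c)/s)² + 4c/s` and `α = ((c-h) + s√Δ)/(2c)`, one has `α² > s/h`. -/
theorem stmt18 (h s c Δ α : ℝ) (h0 : 0 < h) (hs : h < s)
    (hc : c = h / 2)
    (hΔ : Δ = ((h - c) / s) ^ 2 + 4 * c / s)
    (hα : α = ((c - h) + s * Real.sqrt Δ) / (2 * c)) :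
    s / h < α ^ 2 := by
  have hs0 : 0 < s := h0.trans hs
  set D : ℝ := h ^ 2 + 8 * h * s with hD
  have hD0 : 0 ≤ D := by nlinarith
  have hΔD : Δ = D / (2 * s) ^ 2 := by
    rw [hΔ, hc]; field_simp; ring
  have hsqrtΔ : Real.sqrt Δ = Real.sqrt D / (2 * s) := by
    rw [hΔD, Real.sqrt_div hD0, Real.sqrt_sq (by linarith : (0:ℝ) ≤ 2 * s)]
  have hsqD : Real.sqrt D ^ 2 = D := Real.sq_sqrt hD0
  have hlt : Real.sqrt D < h + 2 * s := by
    have : D < (h + 2 * s) ^ 2 := by nlinarith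
    calc Real.sqrt D < Real.sqrt ((h + 2 * s) ^ 2) := Real.sqrt_lt_sqrt hD0 this
    _ = h + 2 * s := Real.sqrt_sq (by linarith)
  have hα' : α = (Real.sqrt D - h) / (2 * h) := by
    rw [hα, hc, hsqrtΔ]; field_simp; ring
  rw [hα']
  rw [div_lt_iff₀ h0]
  have h4 : ((Real.sqrt D - h) / (2 * h)) ^ 2 = (D - 2 * h * Real.sqrt D + h ^ 2) / (4 * h ^ 2) := by
    field_simp
    nlinarith [hsqD]
  rw [h4, div_mul_eq_mul_div, lt_div_iff₀ (by positivity : (0:ℝ) < 4 * h ^ 2)]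
  nlinarith [mul_pos (mul_pos h0 h0) (sub_pos.mpr hlt)]
end
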